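/- If s ≥ 1 is a natural number and d is a positive divisor of s with d² ≠ s, then d is a zero of F_s of order exactly 1, i.e., F_s(d) = 0 and F_s'(d) ≠ 0. -/

import Mathlib

/-! At a divisor `d` of `s` both `d` and `s / d` are integers, so both exponentials equal `1`
and `F_s(d) = 0`. Then `F_s'(d) = 2πi (1 - s / d²)`, which vanishes only if `d² = s`. -/

open Complex Real

lemma exp_two_pi_I_mul_natCast (n : ℕ) : exp (2 * π * I * n) = 1 := by
  rw [mul_comm]
  exact exp_nat_mul_two_pi_mul_I n

lemma exp_two_pi_I_mul_div_natCast_of_dvd {s d : ℕ} (hdvd : d ∣ s) :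
    exp (2 * π * I * s / d) = 1 := by
  obtain ⟨k, rfl⟩ := hdvd
  rcases eq_or_ne d 0 with rfl | hd
  · simp
  · have hd' : (d : ℂ) ≠ 0 := Nat.cast_ne_zero.mpr hd
    rw [Nat.cast_mul, mul_div_assoc, mul_div_cancel_left₀ _ hd']
    exact exp_two_pi_I_mul_natCast k

lemma hasDerivAt_exp_mul_add_exp_mul_div_sub (c a b : ℂ) {z : ℂ} (hz : z ≠ 0) :
    HasDerivAt (fun w : ℂ => exp (c * w) + exp (c * a / w) - b)
      (c * (exp (c * z) - a / z ^ 2 * exp (c * a / z))) z := by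
  have hinv : HasDerivAt (fun w : ℂ => exp (c * a / w))
      (exp (c * a / z) * (c * a * -(z ^ 2)⁻¹)) z := by
    simpa only [div_eq_mul_inv] using ((hasDerivAt_inv hz).const_mul (c * a)).cexp
  refine ((((hasDerivAt_id z).const_mul c).cexp.add hinv).sub_const b).congr_deriv ?_
  rw [id, div_eq_mul_inv]
  ring

theorem stmt_6_general (s : ℕ) (d : ℕ) (hd : 0 < d) (hdvd : d ∣ s)
    (hne : d ^ 2 ≠ s) :
    (Complex.exp (2 * Real.pi * Complex.I * (d : ℂ)) +
        Complex.exp (2 * Real.pi * Complex.I * s / (d : ℂ)) - 2 = 0) ∧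
    deriv (fun w : ℂ => Complex.exp (2 * Real.pi * Complex.I * w) +
        Complex.exp (2 * Real.pi * Complex.I * s / w) - 2) (d : ℂ) ≠ 0 := by
  have hd0 : (d : ℂ) ≠ 0 := Nat.cast_ne_zero.mpr hd.ne'
  have hexp_d := exp_two_pi_I_mul_natCast d
  have hexp_sd := exp_two_pi_I_mul_div_natCast_of_dvd hdvd
  refine ⟨by rw [hexp_d, hexp_sd]; norm_num, ?_⟩
  rw [(hasDerivAt_exp_mul_add_exp_mul_div_sub _ _ 2 hd0).deriv, hexp_d, hexp_sd,
    mul_one, mul_ne_zero_iff]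
  refine ⟨two_pi_I_ne_zero, sub_ne_zero.mpr ?_⟩
  rw [ne_comm, ne_eq, div_eq_one_iff_eq (pow_ne_zero 2 hd0)]
  exact_mod_cast hne.symm

theorem stmt_6 (s : ℕ) (hs : 1 ≤ s) (d : ℕ) (hd : 0 < d) (hdvd : d ∣ s)
    (hne : d ^ 2 ≠ s) :
    (Complex.exp (2 * Real.pi * Complex.I * (d : ℂ)) +
        Complex.exp (2 * Real.pi * Complex.I * s / (d : ℂ)) - 2 = 0) ∧
    deriv (fun w : ℂ => Complex.exp (2 * Real.pi * Complex.I * w) +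
        Complex.exp (2 * Real.pi * Complex.I * s / w) - 2) (d : ℂ) ≠ 0 :=
  stmt_6_general s d hd hdvd hne
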